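/- Analytic core of the diameter estimate (Theorem 1.5): Let E be a real inner product space of finite dimension n − 1, with n ≥ 2, and let k > 0. Let T > 0, let S : (0,T) → (E →L[ℝ] E) be differentiable with each S(t) self-adjoint, and let R : (0,T) → (E →L[ℝ] E) be continuous with each R(t) self-adjoint, satisfying S'(t) = −S(t)∘S(t) − R(t) for all t ∈ (0,T). Let a : (0,T) → ℝ be differentiable, let F : (0,T) → ℝ satisfy F' = a, and set v = e^{F/(n−1)}. Assume that trace(R(t)) + a'(t) + a(t)²/(n−1) ≥ (n−1)·k for all t ∈ (0,T), and that there are constants 0 < v_min ≤ v_max with v_min ≤ v(t) ≤ v_max for all t ∈ (0,T). Then T ≤ (v_max/v_min)·(π/√k). -/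

import Mathlib

/-!
The weighted mean curvature `w = v² (tr S - a)` obeys a Riccati inequality
`w' ≤ -((n-1) k v_min² + w² / ((n-1) v_max²))`: trace the Riccati equation, use
`(tr S)² ≤ (n-1) tr (S²)` for self-adjoint `S`, and absorb the drift `a` with the curvature bound
(the factor `v²` cancels the cross term `2 a (tr S - a) / (n-1)`). A solution of
`ψ' ≤ -(B + ψ² / A)` cannot exist on an interval longer than `π √(A / B)`, because
`arctan (ψ / √(AB)) + √(B / A) t` is nonincreasing while `arctan` takes values in an interval of
length `π`.
-/

open scoped RealInnerProductSpace
open Real Set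

lemma LinearMap.IsSymmetric.sq_trace_le_finrank_mul_trace_comp_self
    {E : Type*} [NormedAddCommGroup E] [InnerProductSpace ℝ E] [FiniteDimensional ℝ E]
    {T : E →ₗ[ℝ] E} (hT : T.IsSymmetric) :
    T.trace ℝ E ^ 2 ≤ Module.finrank ℝ E * (T ∘ₗ T).trace ℝ E := by
  set b := hT.eigenvectorBasis rfl
  set μ := hT.eigenvalues rfl
  have hTb : ∀ i, T (b i) = μ i • b i := hT.apply_eigenvectorBasis rfl
  have htrace : T.trace ℝ E = ∑ i, μ i := by
    simp [T.trace_eq_sum_inner b, hTb, real_inner_smul_right, b.orthonormal.1]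
  have htrace_sq : (T ∘ₗ T).trace ℝ E = ∑ i, μ i ^ 2 := by
    simp [(T ∘ₗ T).trace_eq_sum_inner b, hTb, real_inner_smul_right, b.orthonormal.1, sq]
  rw [htrace, htrace_sq]
  simpa using sq_sum_le_card_mul_sum_sq (s := Finset.univ) (f := μ)

theorem HasDerivAt.trace {𝕜 E : Type*} [NontriviallyNormedField 𝕜] [CompleteSpace 𝕜]
    [NormedAddCommGroup E] [NormedSpace 𝕜 E] [FiniteDimensional 𝕜 E]
    {S : 𝕜 → E →L[𝕜] E} {S' : E →L[𝕜] E} {t : 𝕜} (hS : HasDerivAt S S' t) :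
    HasDerivAt (fun s => LinearMap.trace 𝕜 E (S s)) (LinearMap.trace 𝕜 E S') t :=
  (LinearMap.toContinuousLinearMap
    (LinearMap.trace 𝕜 E ∘ₗ ContinuousLinearMap.coeLM 𝕜)).hasFDerivAt.comp_hasDerivAt t hS

lemma mul_le_pi_of_antitoneOn_arctan_add {g : ℝ → ℝ} {c T : ℝ} (hc : 0 < c)
    (hg : AntitoneOn (fun t => arctan (g t) + c * t) (Ioo 0 T)) : c * T ≤ π := by
  by_contra! hT
  have hπc : 0 < π / c := div_pos pi_pos hc
  have hπT : π / c < T := by rwa [div_lt_iff₀' hc]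
  obtain ⟨ε, hε⟩ : ∃ ε, T - ε - ε = π / c := ⟨(T - π / c) / 2, by ring⟩
  have hmono : arctan (g (T - ε)) + c * (T - ε) ≤ arctan (g ε) + c * ε :=
    hg ⟨by linarith, by linarith⟩ ⟨by linarith, by linarith⟩ (by linarith)
  have hcε : c * (T - ε - ε) = π := by rw [hε]; field_simp
  linarith [arctan_lt_pi_div_two (g ε), neg_pi_div_two_lt_arctan (g (T - ε))]

lemma le_pi_mul_sqrt_div_of_hasDerivAt_le {ψ ψ' : ℝ → ℝ} {A B T : ℝ} (hA : 0 < A) (hB : 0 < B)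
    (hψ : ∀ t ∈ Ioo 0 T, HasDerivAt ψ (ψ' t) t)
    (hψ' : ∀ t ∈ Ioo 0 T, ψ' t ≤ -(B + ψ t ^ 2 / A)) : T ≤ π * √(A / B) := by
  obtain ⟨D, hD, hDD⟩ : ∃ D, 0 < D ∧ D ^ 2 = A * B :=
    ⟨√(A * B), sqrt_pos.2 (mul_pos hA hB), sq_sqrt (mul_pos hA hB).le⟩
  have hc : 0 < B / D := div_pos hB hD
  have hθ : ∀ t ∈ Ioo 0 T, HasDerivAt (fun s => arctan (ψ s / D) + B / D * s)
      (D * ψ' t / (D ^ 2 + ψ t ^ 2) + B / D) t := by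
    intro t ht
    refine (((hψ t ht).div_const D).arctan.add
      ((hasDerivAt_id t).const_mul (B / D))).congr_deriv ?_
    field_simp
  have hθ' : ∀ t ∈ Ioo 0 T, D * ψ' t / (D ^ 2 + ψ t ^ 2) + B / D ≤ 0 := by
    intro t ht
    have hsplit : D * (B + ψ t ^ 2 / A) = B / D * (D ^ 2 + ψ t ^ 2) := by
      field_simp
      linear_combination (ψ t ^ 2) * hDD
    have hDψ' : D * ψ' t ≤ -(B / D * (D ^ 2 + ψ t ^ 2)) := by
      rw [← hsplit, ← mul_neg]; exact mul_le_mul_of_nonneg_left (hψ' t ht) hD.le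
    rw [← le_neg_iff_add_nonpos_right, div_le_iff₀ (by positivity)]
    linarith
  have hanti : AntitoneOn (fun s => arctan (ψ s / D) + B / D * s) (Ioo 0 T) :=
    antitoneOn_of_hasDerivWithinAt_nonpos (convex_Ioo 0 T)
      (fun t ht => (hθ t ht).continuousAt.continuousWithinAt)
      (fun t ht => (hθ t (interior_subset ht)).hasDerivWithinAt)
      (fun t ht => hθ' t (interior_subset ht))
  have hsqrt : √(A / B) = D / B := by
    rw [show A / B = (D / B) ^ 2 by field_simp; linear_combination -hDD, sqrt_sq (by positivity)]
  rw [hsqrt, ← mul_div_assoc, ← div_div_eq_mul_div, le_div_iff₀ hc, mul_comm]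
  exact mul_le_pi_of_antitoneOn_arctan_add hc hanti

lemma weighted_riccati_le {c k σ σ' ρ α α' V vmin vmax : ℝ} (hc : 0 < c) (hk : 0 < k)
    (hvmin : 0 < vmin) (hV : V ∈ Icc vmin vmax)
    (hσ : σ ^ 2 ≤ c * (-σ' - ρ)) (hcurv : c * k ≤ ρ + α' + α ^ 2 / c) :
    V ^ 2 * (2 * (α / c) * (σ - α) + (σ' - α')) ≤
      -(c * k * vmin ^ 2 + (V ^ 2 * (σ - α)) ^ 2 / (c * vmax ^ 2)) := by
  have hshift : 2 * (α / c) * (σ - α) + (σ' - α') ≤ -(c * k + (σ - α) ^ 2 / c) := by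
    have := mul_le_mul_of_nonneg_left hcurv hc.le
    field_simp at this ⊢
    nlinarith
  have hV2 : V ^ 2 ∈ Icc (vmin ^ 2) (vmax ^ 2) :=
    ⟨pow_le_pow_left₀ hvmin.le hV.1 2, pow_le_pow_left₀ (hvmin.trans_le hV.1).le hV.2 2⟩
  have hvmax : 0 < vmax := hvmin.trans_le (hV.1.trans hV.2)
  have hquad : (V ^ 2 * (σ - α)) ^ 2 / (c * vmax ^ 2) ≤ V ^ 2 * ((σ - α) ^ 2 / c) := by
    rw [div_le_iff₀ (by positivity)]
    have := mul_le_mul_of_nonneg_left hV2.2 (by positivity : 0 ≤ V ^ 2 * (σ - α) ^ 2)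
    field_simp
    nlinarith
  nlinarith [mul_le_mul_of_nonneg_left hV2.1 (by positivity : 0 ≤ c * k),
    mul_le_mul_of_nonneg_left hshift (sq_nonneg V)]

theorem le_div_mul_pi_div_sqrt_of_riccati_trace {c k T vmin vmax : ℝ} {σ σ' ρ a a' F : ℝ → ℝ}
    (hc : 0 < c) (hk : 0 < k) (hvmin : 0 < vmin) (hvv : vmin ≤ vmax)
    (hσ : ∀ t ∈ Ioo 0 T, HasDerivAt σ (σ' t) t)
    (ha : ∀ t ∈ Ioo 0 T, HasDerivAt a (a' t) t)
    (hF : ∀ t ∈ Ioo 0 T, HasDerivAt F (a t) t)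
    (hriccati : ∀ t ∈ Ioo 0 T, σ t ^ 2 ≤ c * (-σ' t - ρ t))
    (hcurv : ∀ t ∈ Ioo 0 T, c * k ≤ ρ t + a' t + a t ^ 2 / c)
    (hbound : ∀ t ∈ Ioo 0 T, exp (F t / c) ∈ Icc vmin vmax) :
    T ≤ vmax / vmin * (π / √k) := by
  have hw : ∀ t ∈ Ioo 0 T, HasDerivAt (fun s => exp (F s / c) ^ 2 * (σ s - a s))
      (exp (F t / c) ^ 2 * (2 * (a t / c) * (σ t - a t) + (σ' t - a' t))) t := by
    intro t ht
    refine ((((hF t ht).div_const c).exp.fun_pow 2).mul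
      ((hσ t ht).fun_sub (ha t ht))).congr_deriv ?_
    ring
  have hvmax : 0 < vmax := hvmin.trans_le hvv
  have hT := le_pi_mul_sqrt_div_of_hasDerivAt_le (by positivity : 0 < c * vmax ^ 2)
    (by positivity : 0 < c * k * vmin ^ 2) hw
    fun t ht => weighted_riccati_le hc hk hvmin (hbound t ht) (hriccati t ht) (hcurv t ht)
  have hsqrt : √(c * vmax ^ 2 / (c * k * vmin ^ 2)) = vmax / vmin / √k := by
    rw [show c * vmax ^ 2 / (c * k * vmin ^ 2) = (vmax / vmin) ^ 2 / k by field_simp,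
      sqrt_div' _ hk.le, sqrt_sq (div_nonneg (hvmin.le.trans hvv) hvmin.le)]
  rwa [hsqrt, mul_comm, div_mul_eq_mul_div, mul_div_assoc] at hT

theorem diameter_estimate_core_general
    {E : Type*} [NormedAddCommGroup E] [InnerProductSpace ℝ E]
    [FiniteDimensional ℝ E]
    (n : ℕ) (hn : 2 ≤ n) (hdim : Module.finrank ℝ E = n - 1)
    (k : ℝ) (hk : 0 < k)
    (T : ℝ)
    (S S' : ℝ → E →L[ℝ] E)
    (hS : ∀ t ∈ Set.Ioo (0 : ℝ) T, HasDerivAt S (S' t) t)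
    (hSsa : ∀ t ∈ Set.Ioo (0 : ℝ) T, ∀ x y : E, ⟪S t x, y⟫ = ⟪x, S t y⟫)
    (R : ℝ → E →L[ℝ] E)
    (hRic : ∀ t ∈ Set.Ioo (0 : ℝ) T, S' t = -(S t ∘L S t) - R t)
    (a a' : ℝ → ℝ) (ha : ∀ t ∈ Set.Ioo (0 : ℝ) T, HasDerivAt a (a' t) t)
    (F : ℝ → ℝ) (hF : ∀ t ∈ Set.Ioo (0 : ℝ) T, HasDerivAt F (a t) t)
    (v : ℝ → ℝ) (hv : v = fun t => Real.exp (F t / ((n : ℝ) - 1)))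
    (hcurv : ∀ t ∈ Set.Ioo (0 : ℝ) T,
      ((n : ℝ) - 1) * k ≤
        LinearMap.trace ℝ E (R t).toLinearMap + a' t + (a t) ^ 2 / ((n : ℝ) - 1))
    (vmin vmax : ℝ) (hvmin : 0 < vmin) (hvv : vmin ≤ vmax)
    (hvbound : ∀ t ∈ Set.Ioo (0 : ℝ) T, vmin ≤ v t ∧ v t ≤ vmax) :
    T ≤ vmax / vmin * (Real.pi / Real.sqrt k) := by
  subst hv
  have hc : 0 < (n : ℝ) - 1 := by
    have : (2 : ℝ) ≤ n := by exact_mod_cast hn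
    linarith
  have hdim' : (Module.finrank ℝ E : ℝ) = n - 1 := by
    rw [hdim, Nat.cast_sub (by omega), Nat.cast_one]
  refine le_div_mul_pi_div_sqrt_of_riccati_trace hc hk hvmin hvv
    (σ := fun t => LinearMap.trace ℝ E (S t)) (ρ := fun t => LinearMap.trace ℝ E (R t))
    (fun t ht => (hS t ht).trace) ha hF (fun t ht => ?_) hcurv hvbound
  have hS_sq := LinearMap.IsSymmetric.sq_trace_le_finrank_mul_trace_comp_self (hSsa t ht)
  rw [hdim'] at hS_sq
  simpa [hRic t ht] using hS_sq

/-- **Analytic core of the diameter estimate** (Theorem 1.5). If `S' = -S∘S - R`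
on `(0,T)` with `S`, `R` self-adjoint on an `(n-1)`-dimensional inner product
space, `F' = a`, `v = e^{F/(n-1)}` satisfies `0 < v_min ≤ v ≤ v_max`, and the
weighted Ricci lower bound `trace R + a' + a²/(n-1) ≥ (n-1)·k` holds with
`k > 0`, then `T ≤ (v_max/v_min) · π/√k`. -/
theorem diameter_estimate_core
    {E : Type*} [NormedAddCommGroup E] [InnerProductSpace ℝ E]
    [FiniteDimensional ℝ E]
    (n : ℕ) (hn : 2 ≤ n) (hdim : Module.finrank ℝ E = n - 1)
    (k : ℝ) (hk : 0 < k)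
    (T : ℝ) (hT : 0 < T)
    (S S' : ℝ → E →L[ℝ] E)
    (hS : ∀ t ∈ Set.Ioo (0 : ℝ) T, HasDerivAt S (S' t) t)
    (hSsa : ∀ t ∈ Set.Ioo (0 : ℝ) T, ∀ x y : E, ⟪S t x, y⟫ = ⟪x, S t y⟫)
    (R : ℝ → E →L[ℝ] E) (hRcont : ContinuousOn R (Set.Ioo (0 : ℝ) T))
    (hRsa : ∀ t ∈ Set.Ioo (0 : ℝ) T, ∀ x y : E, ⟪R t x, y⟫ = ⟪x, R t y⟫)
    (hRic : ∀ t ∈ Set.Ioo (0 : ℝ) T, S' t = -(S t ∘L S t) - R t)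
    (a a' : ℝ → ℝ) (ha : ∀ t ∈ Set.Ioo (0 : ℝ) T, HasDerivAt a (a' t) t)
    (F : ℝ → ℝ) (hF : ∀ t ∈ Set.Ioo (0 : ℝ) T, HasDerivAt F (a t) t)
    (v : ℝ → ℝ) (hv : v = fun t => Real.exp (F t / ((n : ℝ) - 1)))
    (hcurv : ∀ t ∈ Set.Ioo (0 : ℝ) T,
      ((n : ℝ) - 1) * k ≤
        LinearMap.trace ℝ E (R t).toLinearMap + a' t + (a t) ^ 2 / ((n : ℝ) - 1))
    (vmin vmax : ℝ) (hvmin : 0 < vmin) (hvv : vmin ≤ vmax)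
    (hvbound : ∀ t ∈ Set.Ioo (0 : ℝ) T, vmin ≤ v t ∧ v t ≤ vmax) :
    T ≤ vmax / vmin * (Real.pi / Real.sqrt k) :=
  diameter_estimate_core_general n hn hdim k hk T S S' hS hSsa R hRic a a' ha F hF v hv hcurv vmin
    vmax hvmin hvv hvbound
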